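/- arXiv:2005.11430 — 2 statements merged into one kernel-verified Lean document; each statement's English description precedes it below -/
import Mathlib

section
/- Under the standing hypotheses including (♠), for any A₁₁ ∈ 𝔄₁₁, B₁₂ ∈ 𝔄₁₂, C₂₁ ∈ 𝔄₂₁, D₂₂ ∈ 𝔄₂₂ one has φ(A₁₁ + B₁₂ + C₂₁ + D₂₂) = φ(A₁₁) + φ(B₁₂) + φ(C₂₁) + φ(D₂₂). -/
set_option linter.unusedSectionVars false

/-- The *-Jordan product `{A,B}_* = AB + BA*`. -/
def jstar {R : Type*} [Ring R] [StarRing R] (A B : R) : R := A * B + B * star A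

/-- The iterated *-Jordan product `q_{n*}(x_1, ..., x_n)`. -/
def qstar {R : Type*} [Ring R] [StarRing R] : List R → R
  | [] => 0
  | x :: xs => xs.foldl jstar x

section Aux

variable {R : Type*} [Ring R] [StarRing R]

lemma jstar_add_right (a x y : R) : jstar a (x + y) = jstar a x + jstar a y := by
  simp only [jstar, mul_add, add_mul]; abel

lemma jstar_add_left (x y a : R) : jstar (x + y) a = jstar x a + jstar y a := by
  simp only [jstar, mul_add, add_mul, star_add]; abel

lemma jstar_nsmul_left (k : ℕ) (x a : R) : jstar (k • x) a = k • jstar x a := by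
  simp only [jstar, smul_mul_assoc, mul_smul_comm, star_nsmul, smul_add]

lemma jstar_nsmul_right (k : ℕ) (a x : R) : jstar a (k • x) = k • jstar a x := by
  simp only [jstar, smul_mul_assoc, mul_smul_comm, smul_add]

lemma foldl_jstar_one (m : ℕ) (y : R) (hy : star y = y) :
    List.foldl jstar y (List.replicate m 1) = 2 ^ m • y := by
  induction m generalizing y with
  | zero => simp
  | succ k ih =>
      rw [List.replicate_succ, List.foldl_cons]
      have h1 : jstar y 1 = 2 • y := by simp [jstar, hy, two_smul]
      rw [h1, ih _ (by simp only [star_nsmul, hy]), smul_smul, pow_succ, mul_comm]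

lemma qstar_ones (m : ℕ) (A B : R) :
    qstar (List.replicate m 1 ++ [A, B]) = 2 ^ m • jstar A B := by
  cases m with
  | zero => simp [qstar]
  | succ k =>
      rw [List.replicate_succ, List.cons_append]
      show List.foldl jstar 1 (List.replicate k 1 ++ [A, B]) = _
      rw [List.foldl_append, foldl_jstar_one k 1 (star_one R)]
      have h1 : jstar ((2:ℕ)^k • (1:R)) A = 2^(k+1) • A := by
        simp only [jstar, star_nsmul, star_one, smul_mul_assoc, mul_smul_comm, one_mul, mul_one,
          ← add_smul]
        rw [pow_succ, mul_two]
      simp only [List.foldl_cons, List.foldl_nil, h1, jstar_nsmul_left]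

lemma op1 (p X : R) (hp : p * p = p) (hps : star p = p) :
    jstar (1 - p) (jstar (jstar p X) p) =
      (1 - p) * X * p + p * star X * (1 - p) := by
  have hp' : ∀ x : R, p * (p * x) = p * x := fun x => by rw [← mul_assoc, hp]
  simp only [jstar, hps, star_mul, star_add, star_sub, star_one, mul_sub, sub_mul, mul_add,
    add_mul, mul_one, one_mul, mul_assoc, hp, hp']
  abel

lemma op2 (q S X : R) (hq : q * q = q) (hqs : star q = q)
    (hS : q * S = 0) (hSq : S * q = S) :
    jstar q (jstar S (jstar q X)) =
      2 • (S * (q * X * q) + (q * X * q) * star S) := by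
  have hq' : ∀ x : R, q * (q * x) = q * x := fun x => by rw [← mul_assoc, hq]
  have hS' : ∀ x : R, q * (S * x) = 0 := fun x => by rw [← mul_assoc, hS, zero_mul]
  have hSq' : ∀ x : R, S * (q * x) = S * x := fun x => by rw [← mul_assoc, hSq]
  have hsSq : star S * q = 0 := by rw [← hqs, ← star_mul, hS, star_zero]
  have hsSq' : ∀ x : R, star S * (q * x) = 0 := fun x => by rw [← mul_assoc, hsSq, zero_mul]
  have hqsS : q * star S = star S := by rw [← hqs, ← star_mul, hSq]
  have hqsS' : ∀ x : R, q * (star S * x) = star S * x := fun x => by rw [← mul_assoc, hqsS]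
  simp only [jstar, hqs, star_mul, star_add, mul_add, add_mul, mul_assoc, two_smul,
    hq, hq', hS, hS', hSq, hSq', hsSq, hsSq', hqsS, hqsS', zero_mul, mul_zero, add_zero, zero_add]
  abel

lemma comp_l {p x q : R} (h : p * x * q = x) (hp : p * p = p) : p * x = x := by
  rw [← h, ← mul_assoc, ← mul_assoc, hp]

lemma comp_r {p x q : R} (h : p * x * q = x) (hq : q * q = q) : x * q = x := by
  rw [← h, mul_assoc, hq]

lemma comp_l0 {p x q : R} (h : p * x * q = x) {r : R} (hr : r * p = 0) : r * x = 0 := by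
  rw [← h, ← mul_assoc, ← mul_assoc, hr, zero_mul, zero_mul]

lemma comp_r0 {p x q : R} (h : p * x * q = x) {r : R} (hr : q * r = 0) : x * r = 0 := by
  rw [← h, mul_assoc, hr, mul_zero]

lemma comp_idem {p q : R} (x : R) (hp : p * p = p) (hq : q * q = q) :
    p * (p * x * q) * q = p * x * q := by
  rw [← mul_assoc, ← mul_assoc, hp, mul_assoc, hq]

lemma comp_cross {p q : R} (y : R) (hpq : p * q = 0) : p * (q * y * p) * q = 0 := by
  rw [← mul_assoc, ← mul_assoc, hpq, zero_mul, zero_mul, zero_mul]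

lemma prod_comp {p x y q : R} (hx : p * x = x) (hy : y * q = y) : p * (x * y) * q = x * y := by
  rw [← mul_assoc, hx, mul_assoc, hy]

lemma prod_zero_l {p x q : R} (y : R) (hx : p * x = 0) : p * (x * y) * q = 0 := by
  rw [← mul_assoc, hx, zero_mul, zero_mul]

end Aux

theorem stmt6 {𝔄 𝔄' : Type*} [CStarAlgebra 𝔄] [CStarAlgebra 𝔄']
    (n : ℕ) (hn : 2 ≤ n)
    (P₁ : 𝔄) (hproj : P₁ * P₁ = P₁) (hsa : star P₁ = P₁) (hne0 : P₁ ≠ 0) (hne1 : P₁ ≠ 1)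
    (φ : 𝔄 → 𝔄') (hbij : Function.Bijective φ) (hunital : φ 1 = 1)
    (hqI : ∀ A B : 𝔄, φ (qstar (List.replicate (n - 2) 1 ++ [A, B])) =
      qstar (List.replicate (n - 2) (φ 1) ++ [φ A, φ B]))
    (hqP : ∀ P ∈ ({P₁, 1 - P₁} : Set 𝔄), ∀ A B : 𝔄,
      φ (qstar (List.replicate (n - 2) P ++ [A, B])) =
      qstar (List.replicate (n - 2) (φ P) ++ [φ A, φ B]))
    (hspade : ∀ P ∈ ({P₁, 1 - P₁} : Set 𝔄), ∀ X : 𝔄, (∀ A : 𝔄, X * A * P = 0) → X = 0) :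
    ∀ A B C D : 𝔄, P₁ * A * P₁ = A → P₁ * B * (1 - P₁) = B → (1 - P₁) * C * P₁ = C →
      (1 - P₁) * D * (1 - P₁) = D →
      φ (A + B + C + D) = φ A + φ B + φ C + φ D := by
  intro A B C D hA hB hC hD
  set P₂ : 𝔄 := 1 - P₁ with hP₂
  -- basic projection facts
  have hP2sa : star P₂ = P₂ := by rw [hP₂, star_sub, star_one, hsa]
  have h12 : P₁ * P₂ = 0 := by rw [hP₂, mul_sub, mul_one, hproj, sub_self]
  have h21 : P₂ * P₁ = 0 := by rw [hP₂, sub_mul, one_mul, hproj, sub_self]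
  have hP2proj : P₂ * P₂ = P₂ := by
    rw [hP₂, sub_mul, one_mul, mul_sub, mul_one, hproj]; abel
  have hP1P2 : 1 - P₂ = P₁ := by rw [hP₂, sub_sub_cancel]
  have m1 : P₁ ∈ ({P₁, P₂} : Set 𝔄) := Set.mem_insert _ _
  have m2 : P₂ ∈ ({P₁, P₂} : Set 𝔄) := Set.mem_insert_of_mem _ rfl
  -- star component relations
  have hAs : P₁ * star A * P₁ = star A := by
    have h := congrArg star hA
    rw [star_mul, star_mul, hsa] at h
    rwa [← mul_assoc] at h
  have hBs : P₂ * star B * P₁ = star B := by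
    have h := congrArg star hB
    rw [star_mul, star_mul, hsa, hP2sa] at h
    rwa [← mul_assoc] at h
  have hCs : P₁ * star C * P₂ = star C := by
    have h := congrArg star hC
    rw [star_mul, star_mul, hsa, hP2sa] at h
    rwa [← mul_assoc] at h
  have hDs : P₂ * star D * P₂ = star D := by
    have h := congrArg star hD
    rw [star_mul, star_mul, hP2sa] at h
    rwa [← mul_assoc] at h
  -- component multiplication facts
  have aL : P₁ * A = A := comp_l hA hproj
  have aR : A * P₁ = A := comp_r hA hproj
  have aL0 : P₂ * A = 0 := comp_l0 hA h21
  have aR0 : A * P₂ = 0 := comp_r0 hA h12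
  have asL : P₁ * star A = star A := comp_l hAs hproj
  have asR : star A * P₁ = star A := comp_r hAs hproj
  have asL0 : P₂ * star A = 0 := comp_l0 hAs h21
  have asR0 : star A * P₂ = 0 := comp_r0 hAs h12
  have bL : P₁ * B = B := comp_l hB hproj
  have bR : B * P₂ = B := comp_r hB hP2proj
  have bL0 : P₂ * B = 0 := comp_l0 hB h21
  have bR0 : B * P₁ = 0 := comp_r0 hB h21
  have bsL : P₂ * star B = star B := comp_l hBs hP2proj
  have bsR : star B * P₁ = star B := comp_r hBs hproj
  have bsL0 : P₁ * star B = 0 := comp_l0 hBs h12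
  have bsR0 : star B * P₂ = 0 := comp_r0 hBs h12
  have cL : P₂ * C = C := comp_l hC hP2proj
  have cR : C * P₁ = C := comp_r hC hproj
  have cL0 : P₁ * C = 0 := comp_l0 hC h12
  have cR0 : C * P₂ = 0 := comp_r0 hC h12
  have csL : P₁ * star C = star C := comp_l hCs hproj
  have csR : star C * P₂ = star C := comp_r hCs hP2proj
  have csL0 : P₂ * star C = 0 := comp_l0 hCs h21
  have csR0 : star C * P₁ = 0 := comp_r0 hCs h21
  have dL : P₂ * D = D := comp_l hD hP2proj
  have dR : D * P₂ = D := comp_r hD hP2proj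
  have dL0 : P₁ * D = 0 := comp_l0 hD h12
  have dR0 : D * P₁ = 0 := comp_r0 hD h21
  have dsL : P₂ * star D = star D := comp_l hDs hP2proj
  have dsR : star D * P₂ = star D := comp_r hDs hP2proj
  have dsL0 : P₁ * star D = 0 := comp_l0 hDs h12
  have dsR0 : star D * P₁ = 0 := comp_r0 hDs h21
  -- the multiplicativity identity
  have hmul : ∀ X Y : 𝔄, φ (2 ^ (n - 2) • jstar X Y) = 2 ^ (n - 2) • jstar (φ X) (φ Y) := by
    intro X Y
    have h := hqI X Y
    rw [hunital] at h
    rwa [qstar_ones, qstar_ones] at h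
  have hinj := hbij.1
  -- φ 0 = 0
  have h0 : φ 0 = 0 := by
    obtain ⟨Z, hZ⟩ := hbij.2 0
    have h := hmul 0 Z
    rw [hZ] at h
    simpa [jstar] using h
  -- scalar cancellation
  have hcancel : ∀ (k : ℕ), k ≠ 0 → ∀ x y : 𝔄, k • x = k • y → x = y := by
    intro k hk x y h
    rw [← Nat.cast_smul_eq_nsmul ℂ, ← Nat.cast_smul_eq_nsmul ℂ] at h
    exact smul_right_injective 𝔄 (Nat.cast_ne_zero.mpr hk) h
  have hc0 : (2:ℕ) ^ (n - 2) ≠ 0 := by positivity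
  -- step lemmas
  have stepL : ∀ T' W₁ W₂ W₃ W₄ : 𝔄, φ T' = φ W₁ + φ W₂ + φ W₃ + φ W₄ →
      ∀ S : 𝔄, φ (2 ^ (n - 2) • jstar S T') =
        φ (2 ^ (n - 2) • jstar S W₁) + φ (2 ^ (n - 2) • jstar S W₂) +
          φ (2 ^ (n - 2) • jstar S W₃) + φ (2 ^ (n - 2) • jstar S W₄) := by
    intro T' W₁ W₂ W₃ W₄ h S
    simp only [hmul]
    rw [h, jstar_add_right, jstar_add_right, jstar_add_right, smul_add, smul_add, smul_add]
  have stepR : ∀ T' W₁ W₂ W₃ W₄ : 𝔄, φ T' = φ W₁ + φ W₂ + φ W₃ + φ W₄ →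
      ∀ S : 𝔄, φ (2 ^ (n - 2) • jstar T' S) =
        φ (2 ^ (n - 2) • jstar W₁ S) + φ (2 ^ (n - 2) • jstar W₂ S) +
          φ (2 ^ (n - 2) • jstar W₃ S) + φ (2 ^ (n - 2) • jstar W₄ S) := by
    intro T' W₁ W₂ W₃ W₄ h S
    simp only [hmul]
    rw [h, jstar_add_left, jstar_add_left, jstar_add_left, smul_add, smul_add, smul_add]
  -- choose T
  obtain ⟨T, hT⟩ := hbij.2 (φ A + φ B + φ C + φ D)
  have t11c : P₁ * (P₁ * T * P₁) * P₁ = P₁ * T * P₁ := comp_idem T hproj hproj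
  have t22c : P₂ * (P₂ * T * P₂) * P₂ = P₂ * T * P₂ := comp_idem T hP2proj hP2proj
  -- Chain 1 : P₁ T P₂ = B
  have hT12 : P₁ * T * P₂ = B := by
    have key1 : ∀ X : 𝔄, jstar P₁ (jstar (jstar P₂ X) P₂) =
        P₁ * X * P₂ + P₂ * star X * P₁ := by
      intro X
      have h := op1 P₂ X hP2proj hP2sa
      rwa [hP1P2] at h
    have kA1 : P₁ * A * P₂ + P₂ * star A * P₁ = 0 := by
      rw [aL, aR0, asL0, zero_mul, add_zero]
    have kB1 : P₁ * B * P₂ + P₂ * star B * P₁ = B + star B := by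
      rw [bL, bR, bsL, bsR]
    have kC1 : P₁ * C * P₂ + P₂ * star C * P₁ = 0 := by
      rw [cL0, zero_mul, csL0, zero_mul, add_zero]
    have kD1 : P₁ * D * P₂ + P₂ * star D * P₁ = 0 := by
      rw [dL0, zero_mul, dsL, dsR0, add_zero]
    have r1 := stepL T A B C D hT P₂
    have r2 := stepR _ _ _ _ _ r1 P₂
    have r3 := stepL _ _ _ _ _ r2 P₁
    simp only [jstar_nsmul_left, jstar_nsmul_right, smul_smul, key1] at r3
    simp only [kA1, kB1, kC1, kD1, smul_zero, h0, zero_add, add_zero] at r3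
    have e1 := hcancel _ (by positivity) _ _ (hinj r3)
    have h := congrArg (fun x => P₁ * x * P₂) e1
    simp only [mul_add, add_mul] at h
    rw [comp_idem T hproj hP2proj, comp_cross (star T) h12, hB] at h
    rw [bsL0, zero_mul, add_zero, add_zero] at h
    exact h
  -- Chain 2 : P₂ T P₁ = C
  have hT21 : P₂ * T * P₁ = C := by
    have key2 : ∀ X : 𝔄, jstar P₂ (jstar (jstar P₁ X) P₁) =
        P₂ * X * P₁ + P₁ * star X * P₂ := by
      intro X
      have h := op1 P₁ X hproj hsa
      rwa [← hP₂] at h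
    have kA2 : P₂ * A * P₁ + P₁ * star A * P₂ = 0 := by
      rw [aL0, zero_mul, asL, asR0, add_zero]
    have kB2 : P₂ * B * P₁ + P₁ * star B * P₂ = 0 := by
      rw [bL0, zero_mul, bsL0, zero_mul, add_zero]
    have kC2 : P₂ * C * P₁ + P₁ * star C * P₂ = C + star C := by
      rw [cL, cR, csL, csR]
    have kD2 : P₂ * D * P₁ + P₁ * star D * P₂ = 0 := by
      rw [dL, dR0, dsL0, zero_mul, add_zero]
    have r1 := stepL T A B C D hT P₁
    have r2 := stepR _ _ _ _ _ r1 P₁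
    have r3 := stepL _ _ _ _ _ r2 P₂
    simp only [jstar_nsmul_left, jstar_nsmul_right, smul_smul, key2] at r3
    simp only [kA2, kB2, kC2, kD2, smul_zero, h0, zero_add, add_zero] at r3
    have e2 := hcancel _ (by positivity) _ _ (hinj r3)
    have h := congrArg (fun x => P₂ * x * P₁) e2
    simp only [mul_add, add_mul] at h
    rw [comp_idem T hP2proj hproj, comp_cross (star T) h21, hC] at h
    rw [csL0, zero_mul, add_zero, add_zero] at h
    exact h
  -- Chain 3 : P₂ T P₂ = D
  have hZ3 : ∀ Z : 𝔄, (P₁ * Z * P₂) * (P₂ * T * P₂) = (P₁ * Z * P₂) * D := by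
    intro Z
    set S : 𝔄 := P₁ * Z * P₂ with hSdef
    have hSc : P₁ * S * P₂ = S := comp_idem Z hproj hP2proj
    have hS1 : P₂ * S = 0 := comp_l0 hSc h21
    have hS2 : S * P₂ = S := comp_r hSc hP2proj
    have hSl : P₁ * S = S := comp_l hSc hproj
    have k3 : ∀ X : 𝔄, jstar P₂ (jstar S (jstar P₂ X)) =
        2 • (S * (P₂ * X * P₂) + (P₂ * X * P₂) * star S) :=
      fun X => op2 P₂ S X hP2proj hP2sa hS1 hS2
    have kA3 : S * (P₂ * A * P₂) + (P₂ * A * P₂) * star S = 0 := by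
      rw [aL0, zero_mul, mul_zero, zero_mul, add_zero]
    have kB3 : S * (P₂ * B * P₂) + (P₂ * B * P₂) * star S = 0 := by
      rw [bL0, zero_mul, mul_zero, zero_mul, add_zero]
    have kC3 : S * (P₂ * C * P₂) + (P₂ * C * P₂) * star S = 0 := by
      rw [cL, cR0, mul_zero, zero_mul, add_zero]
    have r1 := stepL T A B C D hT P₂
    have r2 := stepL _ _ _ _ _ r1 S
    have r3 := stepL _ _ _ _ _ r2 P₂
    simp only [jstar_nsmul_right, smul_smul, k3] at r3
    simp only [kA3, kB3, kC3, hD, smul_zero, h0, zero_add, add_zero, smul_smul] at r3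
    have e3 := hcancel _ (by positivity) _ _ (hinj r3)
    have h := congrArg (fun x => P₁ * x * P₂) e3
    simp only [mul_add, add_mul] at h
    rw [prod_comp hSl (comp_r t22c hP2proj), prod_zero_l (star S) (comp_l0 t22c h12),
      prod_comp hSl dR, prod_zero_l (star S) dL0, add_zero, add_zero] at h
    exact h
  have hT22 : P₂ * T * P₂ = D := by
    have hq2 : ∀ x : 𝔄, x * P₂ * P₂ = x * P₂ := fun x => by rw [mul_assoc, hP2proj]
    have key : star (P₂ * T * P₂) - star D = 0 := by
      apply hspade P₁ m1
      intro W
      have h1 := hZ3 (star W)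
      have h2 := congrArg star h1
      simp only [star_mul, star_star, hsa, hP2sa, ← mul_assoc, hq2] at h2
      rw [sub_mul, sub_mul, sub_eq_zero]
      simp only [star_mul, hP2sa, ← mul_assoc]
      rw [← dsR]
      exact h2
    have := sub_eq_zero.mp key
    rw [← star_sub] at key
    have := star_eq_zero.mp key
    exact sub_eq_zero.mp this
  -- Chain 4 : P₁ T P₁ = A
  have hZ4 : ∀ Z : 𝔄, (P₂ * Z * P₁) * (P₁ * T * P₁) = (P₂ * Z * P₁) * A := by
    intro Z
    set S : 𝔄 := P₂ * Z * P₁ with hSdef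
    have hSc : P₂ * S * P₁ = S := comp_idem Z hP2proj hproj
    have hS1 : P₁ * S = 0 := comp_l0 hSc h12
    have hS2 : S * P₁ = S := comp_r hSc hproj
    have hSl : P₂ * S = S := comp_l hSc hP2proj
    have k4 : ∀ X : 𝔄, jstar P₁ (jstar S (jstar P₁ X)) =
        2 • (S * (P₁ * X * P₁) + (P₁ * X * P₁) * star S) :=
      fun X => op2 P₁ S X hproj hsa hS1 hS2
    have kB4 : S * (P₁ * B * P₁) + (P₁ * B * P₁) * star S = 0 := by
      rw [bL, bR0, mul_zero, zero_mul, add_zero]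
    have kC4 : S * (P₁ * C * P₁) + (P₁ * C * P₁) * star S = 0 := by
      rw [cL0, zero_mul, mul_zero, zero_mul, add_zero]
    have kD4 : S * (P₁ * D * P₁) + (P₁ * D * P₁) * star S = 0 := by
      rw [dL0, zero_mul, mul_zero, zero_mul, add_zero]
    have r1 := stepL T A B C D hT P₁
    have r2 := stepL _ _ _ _ _ r1 S
    have r3 := stepL _ _ _ _ _ r2 P₁
    simp only [jstar_nsmul_right, smul_smul, k4] at r3
    simp only [kB4, kC4, kD4, hA, smul_zero, h0, zero_add, add_zero, smul_smul] at r3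
    have e4 := hcancel _ (by positivity) _ _ (hinj r3)
    have h := congrArg (fun x => P₂ * x * P₁) e4
    simp only [mul_add, add_mul] at h
    rw [prod_comp hSl (comp_r t11c hproj), prod_zero_l (star S) (comp_l0 t11c h21),
      prod_comp hSl aR, prod_zero_l (star S) aL0, add_zero, add_zero] at h
    exact h
  have hT11 : P₁ * T * P₁ = A := by
    have hq1 : ∀ x : 𝔄, x * P₁ * P₁ = x * P₁ := fun x => by rw [mul_assoc, hproj]
    have key : star (P₁ * T * P₁) - star A = 0 := by
      apply hspade P₂ m2
      intro W
      have h1 := hZ4 (star W)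
      have h2 := congrArg star h1
      simp only [star_mul, star_star, hsa, hP2sa, ← mul_assoc, hq1] at h2
      rw [sub_mul, sub_mul, sub_eq_zero]
      simp only [star_mul, hsa, ← mul_assoc]
      rw [← asR]
      exact h2
    rw [← star_sub] at key
    have := star_eq_zero.mp key
    exact sub_eq_zero.mp this
  -- assemble
  have hdecomp : T = P₁ * T * P₁ + P₁ * T * P₂ + P₂ * T * P₁ + P₂ * T * P₂ := by
    rw [hP₂]; noncomm_ring
  rw [hT11, hT12, hT21, hT22] at hdecomp
  rw [← hdecomp]
  exact hT
end

section
/- Under the hypotheses of the main theorem (φ additive, unital, bijective, satisfying the q_{n*}-conditions), Q_i := φ(P_i) is an idempotent in 𝔄': Q_iQ_i = Q_i, for i ∈ {1,2}. -/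
section JordanProduct

variable {R : Type*} [Ring R] [StarRing R]

lemma jstar_one_right (A : R) : jstar A 1 = A + star A := by
  rw [jstar, mul_one, one_mul]

lemma jstar_self_of_isStarProjection {P : R} (hP : IsStarProjection P) : jstar P P = P + P := by
  rw [jstar, hP.isSelfAdjoint.star_eq, hP.isIdempotentElem.eq]

lemma jstar_nsmul_left_s11 (m : ℕ) (A B : R) : jstar (m • A) B = m • jstar A B := by
  simp only [jstar, star_nsmul, smul_mul_assoc, mul_smul_comm, smul_add]

lemma jstar_nsmul_one_left (m : ℕ) (A : R) : jstar (m • 1) A = (2 * m) • A := by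
  rw [jstar_nsmul_left_s11, jstar, star_one, one_mul, mul_one, ← two_nsmul, ← mul_nsmul, mul_comm]

lemma foldl_jstar_replicate_one (k : ℕ) :
    (List.replicate k (1 : R)).foldl jstar 1 = 2 ^ k • (1 : R) := by
  induction k with
  | zero => rw [List.replicate_zero, List.foldl_nil, pow_zero, one_smul]
  | succ k ih =>
    rw [List.replicate_succ', List.foldl_append, ih, List.foldl_cons, List.foldl_nil,
      jstar_nsmul_one_left, pow_succ']

lemma qstar_replicate_one_append (k : ℕ) (A B : R) :
    qstar (List.replicate k 1 ++ [A, B]) = 2 ^ k • jstar A B := by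
  cases k with
  | zero => rw [List.replicate_zero, List.nil_append, pow_zero, one_smul]; rfl
  | succ k =>
    rw [List.replicate_succ, List.cons_append, qstar, List.foldl_append, foldl_jstar_replicate_one,
      List.foldl_cons, List.foldl_cons, List.foldl_nil, jstar_nsmul_one_left, jstar_nsmul_left_s11,
      pow_succ']

end JordanProduct

section JordanMap

variable {R R' : Type*} [Ring R] [StarRing R] [Ring R'] [StarRing R'] {φ : R →+ R'}

lemma map_jstar_of_map_qstar [IsAddTorsionFree R'] (k : ℕ) (h1 : φ 1 = 1)
    (hq : ∀ A B : R, φ (qstar (List.replicate k 1 ++ [A, B])) =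
      qstar (List.replicate k (φ 1) ++ [φ A, φ B]))
    (A B : R) : φ (jstar A B) = jstar (φ A) (φ B) := by
  have h := hq A B
  rw [h1, qstar_replicate_one_append, qstar_replicate_one_append, map_nsmul] at h
  exact nsmul_right_injective (pow_ne_zero k two_ne_zero) h

variable (hφ : ∀ A B : R, φ (jstar A B) = jstar (φ A) (φ B)) (h1 : φ 1 = 1)
include hφ h1

lemma isSelfAdjoint_map_of_map_jstar {P : R} (hP : IsSelfAdjoint P) : IsSelfAdjoint (φ P) := by
  have h := hφ P 1
  rw [h1, jstar_one_right, jstar_one_right, hP.star_eq, map_add] at h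
  exact (add_left_cancel h).symm

lemma isStarProjection_map_of_map_jstar [IsAddTorsionFree R'] {P : R} (hP : IsStarProjection P) :
    IsStarProjection (φ P) := by
  have hsa := isSelfAdjoint_map_of_map_jstar hφ h1 hP.isSelfAdjoint
  refine ⟨?_, hsa⟩
  have h := hφ P P
  rw [jstar_self_of_isStarProjection hP, jstar, hsa.star_eq, map_add, ← two_nsmul,
    ← two_nsmul] at h
  exact (nsmul_right_injective two_ne_zero h).symm

end JordanMap

theorem stmt11_general {𝔄 𝔄' : Type*} [CStarAlgebra 𝔄] [CStarAlgebra 𝔄']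
    (n : ℕ)
    (P₁ : 𝔄) (hproj : P₁ * P₁ = P₁) (hsa : star P₁ = P₁)
    (φ : 𝔄 → 𝔄') (hunital : φ 1 = 1) (hadd : ∀ A B : 𝔄, φ (A + B) = φ A + φ B)
    (hqI : ∀ A B : 𝔄, φ (qstar (List.replicate (n - 2) 1 ++ [A, B])) =
      qstar (List.replicate (n - 2) (φ 1) ++ [φ A, φ B])) :
    ∀ P ∈ ({P₁, 1 - P₁} : Set 𝔄), φ P * φ P = φ P := by
  have : IsAddTorsionFree 𝔄' := .of_isTorsionFree ℂ 𝔄'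
  let ψ : 𝔄 →+ 𝔄' := AddMonoidHom.mk' φ hadd
  have hjstar := map_jstar_of_map_qstar (φ := ψ) (n - 2) hunital hqI
  have hP₁ : IsStarProjection P₁ := ⟨hproj, hsa⟩
  intro P hP
  have hPproj : IsStarProjection P := by
    rcases hP with rfl | rfl
    exacts [hP₁, hP₁.one_sub]
  exact (isStarProjection_map_of_map_jstar hjstar hunital hPproj).isIdempotentElem

theorem stmt11 {𝔄 𝔄' : Type*} [CStarAlgebra 𝔄] [CStarAlgebra 𝔄']
    (n : ℕ) (hn : 2 ≤ n)
    (P₁ : 𝔄) (hproj : P₁ * P₁ = P₁) (hsa : star P₁ = P₁) (hne0 : P₁ ≠ 0) (hne1 : P₁ ≠ 1)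
    (φ : 𝔄 → 𝔄') (hbij : Function.Bijective φ) (hunital : φ 1 = 1) (hadd : ∀ A B : 𝔄, φ (A + B) = φ A + φ B)
    (hqI : ∀ A B : 𝔄, φ (qstar (List.replicate (n - 2) 1 ++ [A, B])) =
      qstar (List.replicate (n - 2) (φ 1) ++ [φ A, φ B]))
    (hqP : ∀ P ∈ ({P₁, 1 - P₁} : Set 𝔄), ∀ A B : 𝔄,
      φ (qstar (List.replicate (n - 2) P ++ [A, B])) =
      qstar (List.replicate (n - 2) (φ P) ++ [φ A, φ B])) :
    ∀ P ∈ ({P₁, 1 - P₁} : Set 𝔄), φ P * φ P = φ P :=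
  stmt11_general n P₁ hproj hsa φ hunital hadd hqI
end
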